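/- Let 𝓕 be a set system and let m, n ≥ 2 be integers such that the partition numbers rad^{(m)}_𝓕 and rad^{(n)}_𝓕 are finite. Then rad^{(mn)}_𝓕 ≤ rad^{(m)}_𝓕 · rad^{(n)}_𝓕. -/
import Mathlib


/-- The `F`-convex hull of `P`: the intersection of all members of `F` containing `P`
(the whole ground set when no member of `F` contains `P`). -/
def convexHull' {X : Type*} (F : Set (Set X)) (P : Set X) : Set X :=
  ⋂₀ {A | A ∈ F ∧ P ⊆ A}

lemma subset_convexHull' {X : Type*} (F : Set (Set X)) (P : Set X) :
    P ⊆ convexHull' F P := fun x hx => Set.mem_sInter.2 fun _ hA => hA.2 hx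

lemma convexHull'_subset {X : Type*} (F : Set (Set X)) {P Q : Set X}
    (h : P ⊆ convexHull' F Q) : convexHull' F P ⊆ convexHull' F Q := by
  intro x hx
  refine Set.mem_sInter.2 fun A hA => ?_
  have h1 : convexHull' F Q ⊆ A := Set.sInter_subset_of_mem hA
  exact Set.mem_sInter.1 hx A ⟨hA.1, fun p hp => h1 (h hp)⟩

lemma convexHull'_mono {X : Type*} (F : Set (Set X)) {P Q : Set X} (h : P ⊆ Q) :
    convexHull' F P ⊆ convexHull' F Q :=
  convexHull'_subset F (h.trans (subset_convexHull' F Q))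

lemma multiset_split {X : Type*} : ∀ (k : ℕ) (c : Fin k → ℕ) (S : Multiset X),
    Multiset.card S = ∑ i, c i →
    ∃ T : Fin k → Multiset X, (∑ i, T i) = S ∧ ∀ i, Multiset.card (T i) = c i := by
  intro k
  induction k with
  | zero =>
    intro c S h
    simp only [Finset.univ_eq_empty, Finset.sum_empty] at h
    exact ⟨fun i => i.elim0, by simp [Multiset.card_eq_zero.mp h], fun i => i.elim0⟩
  | succ k ih =>
    intro c S h
    rw [Fin.sum_univ_succ] at h
    set l := S.toList with hl
    have hlen : l.length = Multiset.card S := by simp [hl]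
    have hc0 : c 0 ≤ l.length := by omega
    obtain ⟨T', hT'sum, hT'card⟩ := ih (fun i => c i.succ) (↑(l.drop (c 0)))
      (by simp; omega)
    refine ⟨Fin.cases (↑(l.take (c 0))) T', ?_, ?_⟩
    · rw [Fin.sum_univ_succ]
      simp only [Fin.cases_zero, Fin.cases_succ]
      rw [hT'sum]
      rw [show ((l.take (c 0) : Multiset X)) + ((l.drop (c 0) : Multiset X))
        = ((l.take (c 0) ++ l.drop (c 0) : List X) : Multiset X) from rfl]
      simp [hl]
    · intro i
      induction i using Fin.cases with
      | zero => simp [hc0]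
      | succ j => simpa using hT'card j

lemma map_lift {α β : Type*} (f : α → β) (k : ℕ) :
    ∀ (T : Multiset α) (P : Fin k → Multiset β), (∑ i, P i) = T.map f →
    ∃ Q : Fin k → Multiset α, (∑ i, Q i) = T ∧ ∀ i, (Q i).map f = P i := by
  intro T
  induction T using Multiset.induction with
  | empty =>
    intro P h
    simp only [Multiset.map_zero] at h
    have : ∀ i, P i = 0 := by
      intro i
      have := (Finset.sum_eq_zero_iff.mp h) i (Finset.mem_univ i)
      exact this
    exact ⟨fun _ => 0, by simp, fun i => by simp [this i]⟩
  | cons a T ih =>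
    classical
    intro P h
    rw [Multiset.map_cons] at h
    have hmem : f a ∈ ∑ i, P i := by rw [h]; exact Multiset.mem_cons_self _ _
    obtain ⟨i0, -, hi0⟩ := Multiset.mem_sum.mp hmem
    set P' : Fin k → Multiset β := Function.update P i0 ((P i0).erase (f a)) with hP'
    have h2 : (∑ i, P i) = P i0 + ∑ i ∈ Finset.univ \ {i0}, P i := by
      rw [← Finset.erase_eq, ← Finset.add_sum_erase _ _ (Finset.mem_univ i0)]
    have hsum' : (∑ i, P' i) = T.map f := by
      have h1 : (∑ i, P' i) = (P i0).erase (f a) + ∑ i ∈ Finset.univ \ {i0}, P i := by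
        rw [hP', Finset.sum_update_of_mem (Finset.mem_univ i0)]
      have h3 : f a ::ₘ (∑ i, P' i) = ∑ i, P i := by
        rw [h1, h2, ← Multiset.cons_add, Multiset.cons_erase hi0]
      exact (Multiset.cons_inj_right _).mp (h3.trans h)
    obtain ⟨Q', hQ'sum, hQ'map⟩ := ih P' hsum'
    refine ⟨Function.update Q' i0 (a ::ₘ Q' i0), ?_, ?_⟩
    · rw [Finset.sum_update_of_mem (Finset.mem_univ i0)]
      rw [Multiset.cons_add, ← Finset.erase_eq,
        Finset.add_sum_erase _ _ (Finset.mem_univ i0), hQ'sum]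
    · intro i
      by_cases hi : i = i0
      · subst hi
        rw [Function.update_self, Multiset.map_cons, hQ'map i, hP', Function.update_self,
          Multiset.cons_erase hi0]
      · rw [Function.update_of_ne hi, hQ'map i, hP', Function.update_of_ne hi]

/-- Every multiset over the ground set of size `r` admits a partition into `k` nonempty
multisets whose `F`-convex hulls (of their supports) have a common point. -/
def HasPartitionAt {X : Type*} (F : Set (Set X)) (k r : ℕ) : Prop :=
  ∀ S : Multiset X, Multiset.card S = r →
    ∃ P : Fin k → Multiset X, (∑ i, P i) = S ∧ (∀ i, P i ≠ 0) ∧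
      (⋂ i, convexHull' F {x | x ∈ P i}).Nonempty

/-- The `k`-th partition number of a set system, `∞` if no `r` works. -/
noncomputable def partitionNumber {X : Type*} (F : Set (Set X)) (k : ℕ) : ℕ∞ :=
  sInf {r : ℕ∞ | ∃ n : ℕ, r = n ∧ HasPartitionAt F k n}

lemma partitionNumber_le {X : Type*} (F : Set (Set X)) (k r : ℕ)
    (h : HasPartitionAt F k r) : partitionNumber F k ≤ r :=
  sInf_le ⟨r, rfl, h⟩

lemma partitionNumber_spec {X : Type*} (F : Set (Set X)) (k : ℕ)
    (h : partitionNumber F k ≠ ⊤) :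
    ∃ r : ℕ, partitionNumber F k = r ∧ HasPartitionAt F k r := by
  have hne : {n : ℕ | HasPartitionAt F k n}.Nonempty := by
    by_contra hc
    rw [Set.not_nonempty_iff_eq_empty] at hc
    apply h
    have : {r : ℕ∞ | ∃ n : ℕ, r = n ∧ HasPartitionAt F k n} = ∅ := by
      ext r
      simp only [Set.mem_setOf_eq, Set.mem_empty_iff_false, iff_false, not_exists]
      rintro n ⟨rfl, hn⟩
      exact absurd hn (by simpa using Set.eq_empty_iff_forall_notMem.mp hc n)
    rw [partitionNumber, this, sInf_empty]
  refine ⟨sInf {n : ℕ | HasPartitionAt F k n}, ?_, Nat.sInf_mem hne⟩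
  refine le_antisymm (sInf_le ⟨_, rfl, Nat.sInf_mem hne⟩) (le_sInf ?_)
  rintro r ⟨n, rfl, hn⟩
  exact_mod_cast Nat.sInf_le hn

lemma sum_map_swap {α β : Type*} (n : ℕ) (M : Multiset α) (f : α → Fin n → Multiset β) :
    (∑ k : Fin n, (M.map (fun j => f j k)).sum) = (M.map (fun j => ∑ k, f j k)).sum := by
  induction M using Multiset.induction with
  | empty => simp
  | cons a M ih => simp [Finset.sum_add_distrib, ih]

/-- For `m, n ≥ 2` with finite partition numbers `rad⁽ᵐ⁾_F` and `rad⁽ⁿ⁾_F`, one has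
`rad⁽ᵐⁿ⁾_F ≤ rad⁽ᵐ⁾_F · rad⁽ⁿ⁾_F`. -/
theorem partitionNumber_mul_le {X : Type*} (F : Set (Set X)) (m n : ℕ)
    (hm : 2 ≤ m) (hn : 2 ≤ n)
    (hmf : partitionNumber F m ≠ ⊤) (hnf : partitionNumber F n ≠ ⊤) :
    partitionNumber F (m * n) ≤ partitionNumber F m * partitionNumber F n := by
  obtain ⟨a, ha_eq, ha⟩ := partitionNumber_spec F m hmf
  obtain ⟨b, hb_eq, hb⟩ := partitionNumber_spec F n hnf
  have key : HasPartitionAt F (m * n) (a * b) := by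
    intro S hS
    -- split S into a groups of size b
    obtain ⟨G, hGsum, hGcard⟩ := multiset_split a (fun _ => b) S
      (by simp [hS, Finset.sum_const, mul_comm])
    -- partition each group into n parts with a common point y j
    choose Q hQsum hQne hQint using fun j => hb (G j) (hGcard j)
    choose y hy using hQint
    -- partition the multiset of the y j's into m parts
    set Y : Multiset X := (Finset.univ.val : Multiset (Fin a)).map y with hY
    obtain ⟨R, hRsum, hRne, hRint⟩ := ha Y (by simp [hY])
    obtain ⟨z, hz⟩ := hRint
    -- lift the partition of Y to a partition of indices
    obtain ⟨J, hJsum, hJmap⟩ := map_lift y m (Finset.univ.val) R (by rw [hRsum])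
    set e : Fin m × Fin n ≃ Fin (m * n) := finProdFinEquiv with he
    set Pt : Fin (m * n) → Multiset X :=
      fun t => ((J (e.symm t).1).map (fun j => Q j (e.symm t).2)).sum with hPt
    have hQle : ∀ (i : Fin m) (k : Fin n) (j : Fin a), j ∈ J i →
        Q j k ≤ Pt (e (i, k)) := by
      intro i k j hj
      have hsymm : e.symm (e (i, k)) = (i, k) := e.symm_apply_apply _
      have hmem : Q j k ∈ (J i).map (fun j => Q j k) := Multiset.mem_map_of_mem _ hj
      have hPt' : Pt (e (i, k)) = ((J i).map (fun j => Q j k)).sum := by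
        rw [hPt]; simp only [hsymm]
      rw [hPt']
      exact Multiset.le_sum_of_mem hmem
    refine ⟨Pt, ?_, ?_, ⟨z, ?_⟩⟩
    · calc (∑ t, Pt t) = ∑ p : Fin m × Fin n, Pt (e p) := (Equiv.sum_comp e Pt).symm
        _ = ∑ i : Fin m, ∑ k : Fin n, ((J i).map (fun j => Q j k)).sum := by
            rw [Fintype.sum_prod_type]
            exact Finset.sum_congr rfl fun i _ => Finset.sum_congr rfl fun k _ => by
              simp [hPt]
        _ = ∑ i : Fin m, ((J i).map G).sum := by
            refine Finset.sum_congr rfl fun i _ => ?_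
            rw [sum_map_swap]
            congr 1
            exact Multiset.map_congr rfl fun j _ => hQsum j
        _ = ((∑ i, J i).map G).sum := by
            let ψ : Multiset (Fin a) →+ Multiset X :=
              { toFun := fun M => (M.map G).sum
                map_zero' := by simp
                map_add' := fun M N => by simp }
            exact (map_sum ψ J Finset.univ).symm
        _ = S := by rw [hJsum, ← hGsum]; rfl
    · intro t
      have hRne' : (J (e.symm t).1).map y ≠ 0 := by
        rw [hJmap]; exact hRne _
      have hJne : J (e.symm t).1 ≠ 0 := fun h0 => hRne' (by simp [h0])
      obtain ⟨j, hj⟩ := Multiset.exists_mem_of_ne_zero hJne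
      obtain ⟨x, hx⟩ := Multiset.exists_mem_of_ne_zero (hQne j (e.symm t).2)
      have : x ∈ Pt t := by
        have h1 := hQle (e.symm t).1 (e.symm t).2 j hj
        rw [Prod.mk.eta, Equiv.apply_symm_apply] at h1
        exact Multiset.mem_of_le h1 hx
      exact fun h0 => by simp [h0] at this
    · rw [Set.mem_iInter]
      intro t
      set i := (e.symm t).1
      set k := (e.symm t).2
      have het : e (i, k) = t := by rw [Prod.mk.eta, Equiv.apply_symm_apply]
      have hsub : {x | x ∈ R i} ⊆ convexHull' F {x | x ∈ Pt t} := by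
        intro x hx
        have : x ∈ (J i).map y := by rw [hJmap]; exact hx
        obtain ⟨j, hjJ, rfl⟩ := Multiset.mem_map.mp this
        have hyj : y j ∈ convexHull' F {x | x ∈ Q j k} :=
          Set.mem_iInter.mp (hy j) k
        refine convexHull'_subset F ?_ hyj
        intro w hw
        have h1 := hQle i k j hjJ
        rw [het] at h1
        exact subset_convexHull' F _ (Multiset.mem_of_le h1 hw)
      exact convexHull'_subset F hsub (Set.mem_iInter.mp hz i)
  calc partitionNumber F (m * n) ≤ ((a * b : ℕ) : ℕ∞) :=
        partitionNumber_le F (m * n) (a * b) key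
    _ = partitionNumber F m * partitionNumber F n := by
        rw [ha_eq, hb_eq]; exact_mod_cast Nat.cast_mul a b
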